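/- Let L = I − W be the directed Laplacian of a strongly connected graph with random walk matrix W and mixing time t_mix. Then √t_mix ≤ 16 ||L†||₁, where ||L†||₁ is the ℓ₁→ℓ₁ operator norm of the pseudoinverse. -/

import Mathlib

open Matrix Finset

/-- The lazy random walk matrix `(I + W)/2`. -/
noncomputable def lazyWalk {n : ℕ} (W : Matrix (Fin n) (Fin n) ℝ) :
    Matrix (Fin n) (Fin n) ℝ :=
  (1 / 2 : ℝ) • ((1 : Matrix (Fin n) (Fin n) ℝ) + W)

/-- `B` is the Moore–Penrose pseudoinverse of `A` (the four Penrose conditions). -/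
def IsMoorePenrose {m : Type*} [Fintype m] [DecidableEq m]
    (A B : Matrix m m ℝ) : Prop :=
  A * B * A = A ∧ B * A * B = B ∧ (A * B)ᵀ = A * B ∧ (B * A)ᵀ = B * A

/-!
Let `T = t_mix - 1` and `M = (I + W)/2`. By minimality of `t_mix` some distribution `p` has
`‖M^T (p - s)‖₁ > 1/2`. Irreducibility makes the left kernel of `L = I - W` the constants, so
`p - s`, which sums to zero, lies in the range of `L` and equals `L z` with `z = L† (p - s)`,
`‖z‖₁ ≤ 2 ‖L†‖₁`. Now `M^T L = 2^{-T} (I + W)^T (I - W)` is a polynomial in the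
`ℓ₁`-contraction `W` whose coefficients `C(T, k) - C(T, k - 1)` have absolute sum
`2 C(T, ⌊T/2⌋) ≤ 2^{T+1} / √(T+1)`. Hence `1/2 < 4 ‖L†‖₁ / √t_mix`.
-/

open Polynomial

theorem sum_abs_mulVec_le_of_sum_abs_col_le {m n : Type*} [Fintype m] [Fintype n]
    (M : Matrix m n ℝ) {B : ℝ} (hB : ∀ j, ∑ i, |M i j| ≤ B) (x : n → ℝ) :
    ∑ i, |(M *ᵥ x) i| ≤ B * ∑ j, |x j| :=
  calc ∑ i, |(M *ᵥ x) i| ≤ ∑ i, ∑ j, |M i j| * |x j| := by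
        gcongr with i
        simpa only [mulVec, dotProduct, abs_mul] using abs_sum_le_sum_abs (fun j => M i j * x j) _
    _ = ∑ j, (∑ i, |M i j|) * |x j| := by simp only [sum_mul]; exact sum_comm
    _ ≤ ∑ j, B * |x j| := by gcongr with j; exact hB j
    _ = B * ∑ j, |x j| := (mul_sum ..).symm

theorem sum_range_abs_sub_of_unimodal (f : ℕ → ℝ) {m N : ℕ} (hmN : m ≤ N)
    (hup : ∀ i < m, f i ≤ f (i + 1)) (hdown : ∀ i, m ≤ i → i < N → f (i + 1) ≤ f i) :
    ∑ i ∈ range N, |f (i + 1) - f i| = 2 * f m - f 0 - f N := by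
  rw [← sum_range_add_sum_Ico _ hmN,
    sum_congr rfl fun i hi => abs_of_nonneg (sub_nonneg.2 (hup i (mem_range.1 hi))),
    sum_congr rfl fun i hi =>
      abs_of_nonpos (sub_nonpos.2 (hdown i (mem_Ico.1 hi).1 (mem_Ico.1 hi).2)),
    sum_range_sub, sum_neg_distrib, sum_Ico_sub _ hmN]
  ring

theorem sum_abs_sub_le_of_nonneg {ι : Type*} [Fintype ι] {p s : ι → ℝ} (hp : ∀ i, 0 ≤ p i)
    (hs : ∀ i, 0 ≤ s i) : ∑ i, |p i - s i| ≤ ∑ i, p i + ∑ i, s i := by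
  rw [← sum_add_distrib]
  gcongr with i
  exact abs_sub_le_iff.2 ⟨by linarith [hs i], by linarith [hp i]⟩

namespace Nat

theorem choose_succ_le_choose_of_le_two_mul_add_one {n k : ℕ} (h : n ≤ 2 * k + 1) :
    n.choose (k + 1) ≤ n.choose k := by
  refine Nat.le_of_mul_le_mul_right ?_ k.succ_pos
  rw [choose_succ_right_eq]
  exact Nat.mul_le_mul_left _ (by omega)

theorem centralBinom_sq_mul_le (m : ℕ) : m.centralBinom ^ 2 * (3 * m + 1) ≤ 16 ^ m := by
  induction m with
  | zero => simp
  | succ m ih =>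
    have hrec := succ_mul_centralBinom_succ m
    refine Nat.le_of_mul_le_mul_right (c := (m + 1) ^ 2) ?_ (by positivity)
    calc (m + 1).centralBinom ^ 2 * (3 * (m + 1) + 1) * (m + 1) ^ 2
        = ((m + 1) * (m + 1).centralBinom) ^ 2 * (3 * m + 4) := by ring
      _ = m.centralBinom ^ 2 * 4 * ((2 * m + 1) ^ 2 * (3 * m + 4)) := by rw [hrec]; ring
      _ ≤ m.centralBinom ^ 2 * 4 * (4 * (3 * m + 1) * (m + 1) ^ 2) := by gcongr _ * ?_; nlinarith
      _ = 16 * (m.centralBinom ^ 2 * (3 * m + 1)) * (m + 1) ^ 2 := by ring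
      _ ≤ 16 * 16 ^ m * (m + 1) ^ 2 := by gcongr
      _ = 16 ^ (m + 1) * (m + 1) ^ 2 := by ring

theorem choose_half_sq_mul_succ_le (T : ℕ) : T.choose (T / 2) ^ 2 * (T + 1) ≤ 4 ^ T := by
  obtain ⟨m, rfl | rfl⟩ := T.even_or_odd'
  · rw [show 2 * m / 2 = m by omega, ← centralBinom_eq_two_mul_choose, pow_mul]
    calc m.centralBinom ^ 2 * (2 * m + 1) ≤ m.centralBinom ^ 2 * (3 * m + 1) := by gcongr; omega
      _ ≤ 16 ^ m := centralBinom_sq_mul_le m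
  · have hodd : (m + 1).centralBinom = 2 * (2 * m + 1).choose m := by
      rw [centralBinom_eq_two_mul_choose, show 2 * (m + 1) = 2 * m + 1 + 1 by ring,
        choose_succ_succ, choose_symm_half]
      ring
    have := centralBinom_sq_mul_le (m + 1)
    have h16 : 16 ^ (m + 1) = 4 * 4 ^ (2 * m + 1) := by
      rw [pow_succ, pow_succ, pow_mul]; norm_num; ring
    rw [hodd, h16] at this
    rw [show (2 * m + 1) / 2 = m by omega]
    nlinarith

end Nat

theorem choose_half_mul_sqrt_succ_le (T : ℕ) :
    (T.choose (T / 2) : ℝ) * √(T + 1) ≤ 2 ^ T := by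
  rw [← Real.sqrt_sq (by positivity : (0 : ℝ) ≤ T.choose (T / 2)),
    ← Real.sqrt_mul (by positivity),
    ← Real.sqrt_sq (by positivity : (0 : ℝ) ≤ 2 ^ T)]
  gcongr
  calc (T.choose (T / 2) : ℝ) ^ 2 * (T + 1) ≤ 4 ^ T := by
        exact_mod_cast Nat.choose_half_sq_mul_succ_le T
    _ = (2 ^ T) ^ 2 := by rw [← pow_mul, mul_comm, pow_mul]; norm_num

theorem sqrt_succ_lt_of_half_lt_choose_half_div_two_pow_mul {T : ℕ} {c : ℝ}
    (h : 1 / 2 < 2 * T.choose (T / 2) / 2 ^ T * c) : √(T + 1 : ℝ) < 4 * c := by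
  have hC : (0 : ℝ) < T.choose (T / 2) := by exact_mod_cast Nat.choose_pos (Nat.div_le_self T 2)
  rw [div_mul_eq_mul_div, lt_div_iff₀ (by positivity)] at h
  exact lt_of_mul_lt_mul_left ((choose_half_mul_sqrt_succ_le T).trans_lt (by linarith)) hC.le

theorem sum_abs_coeff_one_add_X_pow_mul_one_sub_X (T : ℕ) :
    ∑ k ∈ range (T + 2), |((1 + X : ℝ[X]) ^ T * (1 - X)).coeff k| =
      2 * (T.choose (T / 2) : ℝ) := by
  set f : ℕ → ℝ := fun k => (X * (1 + X : ℝ[X]) ^ T).coeff k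
  have hf0 : f 0 = 0 := coeff_X_mul_zero _
  have hf : ∀ k, f (k + 1) = T.choose k := fun k => by
    simp only [f, coeff_X_mul, coeff_one_add_X_pow]
  have hcoeff : ∀ k, ((1 + X : ℝ[X]) ^ T * (1 - X)).coeff k = f (k + 1) - f k := fun k => by
    simp only [f, mul_sub, mul_one, coeff_sub, mul_comm X, coeff_mul_X]
  simp_rw [hcoeff]
  rw [sum_range_abs_sub_of_unimodal f (m := T / 2 + 1) (by omega), hf0, hf, hf,
    Nat.choose_eq_zero_of_lt (by omega : T < T + 1)]
  · simp
  · rintro (_ | k) hk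
    · simp [hf0, hf]
    · rw [hf, hf]; exact_mod_cast Nat.choose_le_succ_of_lt_half_left (by omega)
  · rintro (_ | k) hk _
    · omega
    · rw [hf, hf]; exact_mod_cast Nat.choose_succ_le_choose_of_le_two_mul_add_one (by omega)

section ColStochastic

variable {n : Type*} [Fintype n] [DecidableEq n] {W : Matrix n n ℝ}

theorem sum_abs_aeval_apply_le (hW : W ∈ colStochastic ℝ n) {p : ℝ[X]} {N : ℕ}
    (hp : p.natDegree < N) (j : n) :
    ∑ i, |aeval W p i j| ≤ ∑ k ∈ range N, |p.coeff k| := by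
  rw [aeval_eq_sum_range' hp]
  calc ∑ i, |(∑ k ∈ range N, p.coeff k • W ^ k) i j|
      ≤ ∑ i, ∑ k ∈ range N, |p.coeff k| * (W ^ k) i j := by
        gcongr with i
        rw [Matrix.sum_apply]
        refine (abs_sum_le_sum_abs _ _).trans_eq (sum_congr rfl fun k _ => ?_)
        rw [Matrix.smul_apply, smul_eq_mul, abs_mul,
          abs_of_nonneg (nonneg_of_mem_colStochastic (pow_mem hW k))]
    _ = ∑ k ∈ range N, |p.coeff k| := by
        rw [sum_comm]
        simp only [← mul_sum, sum_col_of_mem_colStochastic (pow_mem hW _), mul_one]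

theorem eq_of_vecMul_eq_self_of_le (hW : W ∈ colStochastic ℝ n) {q : n → ℝ}
    (hq : q ᵥ* W = q) {i j : n} (hmax : ∀ k, q k ≤ q j) (hpos : 0 < W i j) : q i = q j := by
  have hqj : ∑ k, q k * W k j = q j := congrFun hq j
  have hzero : ∑ k, W k j * (q j - q k) = 0 := by
    simp only [mul_sub, sum_sub_distrib, ← sum_mul, sum_col_of_mem_colStochastic hW, one_mul]
    simp only [mul_comm (W _ j), hqj, sub_self]
  have hterm := (sum_eq_zero_iff_of_nonneg fun k _ =>
    mul_nonneg (nonneg_of_mem_colStochastic hW) (sub_nonneg.2 (hmax k))).1 hzero i (mem_univ i)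
  linarith [(mul_eq_zero.1 hterm).resolve_left hpos.ne']

theorem eq_of_vecMul_eq_self (hW : W ∈ colStochastic ℝ n)
    (hirr : ∀ i j, ∃ k : ℕ, 0 < (W ^ k) i j)
    {q : n → ℝ} (hq : q ᵥ* W = q) (i j : n) : q i = q j := by
  have hqk : ∀ k : ℕ, q ᵥ* W ^ k = q := fun k => by
    induction k with
    | zero => simp
    | succ k ih => rw [pow_succ, ← vecMul_vecMul, ih, hq]
  have : Nonempty n := ⟨i⟩
  obtain ⟨m, hm⟩ := Finite.exists_max q
  have hconst : ∀ i, q i = q m := fun i => by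
    obtain ⟨k, hk⟩ := hirr i m
    exact eq_of_vecMul_eq_self_of_le (pow_mem hW k) (hqk k) hm hk
  rw [hconst i, hconst j]

theorem IsMoorePenrose.sub_mulVec_vecMul_eq_zero {A B : Matrix n n ℝ} (h : IsMoorePenrose A B)
    (v : n → ℝ) : (v - (A * B) *ᵥ v) ᵥ* A = 0 := by
  rw [sub_vecMul, ← vecMul_transpose, h.2.2.1, vecMul_vecMul, h.1, sub_self]

theorem mulVec_pinv_mulVec_eq_self (hW : W ∈ colStochastic ℝ n)
    (hirr : ∀ i j, ∃ k : ℕ, 0 < (W ^ k) i j) {Lp : Matrix n n ℝ}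
    (hLp : IsMoorePenrose (1 - W) Lp) {v : n → ℝ} (hv : ∑ i, v i = 0) :
    (1 - W) *ᵥ (Lp *ᵥ v) = v := by
  set q := v - ((1 - W) * Lp) *ᵥ v with hq
  have hfix : q ᵥ* W = q := by
    have := hLp.sub_mulVec_vecMul_eq_zero v
    rwa [vecMul_sub, vecMul_one, sub_eq_zero, eq_comm] at this
  have hsum : ∑ i, q i = 0 := by
    simp only [hq, Pi.sub_apply, sum_sub_distrib, hv, ← mulVec_mulVec, sub_mulVec, one_mulVec,
      sum_mulVec_of_mem_colStochastic hW, sub_self]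
  have hq0 : ∀ i, q i = 0 := fun i => by
    have hconst := eq_of_vecMul_eq_self hW hirr hfix
    simp only [fun j => hconst j i, sum_const, card_univ, nsmul_eq_mul] at hsum
    exact (mul_eq_zero.1 hsum).resolve_left
      (by exact_mod_cast (Fintype.card_pos_iff.2 ⟨i⟩).ne')
  rw [mulVec_mulVec]
  exact (sub_eq_zero.1 (funext hq0)).symm

end ColStochastic

section LazyWalk

variable {n : ℕ} {W : Matrix (Fin n) (Fin n) ℝ}

theorem lazyWalk_pow_mulVec_of_mulVec_eq_self {s : Fin n → ℝ} (hs : W *ᵥ s = s) (T : ℕ) :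
    lazyWalk W ^ T *ᵥ s = s := by
  induction T with
  | zero => simp
  | succ T ih =>
    rw [pow_succ', ← mulVec_mulVec, ih, lazyWalk, smul_mulVec, add_mulVec, one_mulVec, hs]
    module

theorem lazyWalk_pow_mul_one_sub (W : Matrix (Fin n) (Fin n) ℝ) (T : ℕ) :
    lazyWalk W ^ T * (1 - W) = (1 / 2 : ℝ) ^ T • aeval W ((1 + X : ℝ[X]) ^ T * (1 - X)) := by
  rw [lazyWalk, _root_.smul_pow, smul_mul_assoc]
  simp

theorem sum_abs_lazyWalk_pow_mul_one_sub_mulVec_le (hW : W ∈ colStochastic ℝ (Fin n)) (T : ℕ)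
    (z : Fin n → ℝ) :
    ∑ i, |((lazyWalk W ^ T * (1 - W)) *ᵥ z) i| ≤
      2 * T.choose (T / 2) / 2 ^ T * ∑ i, |z i| := by
  refine sum_abs_mulVec_le_of_sum_abs_col_le _ (fun j => ?_) z
  have hdeg : ((1 + X : ℝ[X]) ^ T * (1 - X)).natDegree < T + 2 := by
    have : ((1 + X : ℝ[X]) ^ T * (1 - X)).natDegree ≤ T + 1 := by compute_degree
    omega
  simp only [lazyWalk_pow_mul_one_sub, Matrix.smul_apply, smul_eq_mul, abs_mul, ← mul_sum,
    abs_of_nonneg (by positivity : (0 : ℝ) ≤ (1 / 2) ^ T)]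
  calc (1 / 2 : ℝ) ^ T * ∑ i, |aeval W ((1 + X : ℝ[X]) ^ T * (1 - X)) i j|
      ≤ (1 / 2) ^ T * (2 * T.choose (T / 2)) := by
        gcongr
        exact (sum_abs_aeval_apply_le hW hdeg j).trans_eq
          (sum_abs_coeff_one_add_X_pow_mul_one_sub_X T)
    _ = 2 * T.choose (T / 2) / 2 ^ T := by rw [_root_.one_div_pow]; ring

end LazyWalk

theorem sqrt_tmix_le_pinv_norm_general {n : ℕ}
    (W : Matrix (Fin n) (Fin n) ℝ)
    (hWnn : ∀ i j, 0 ≤ W i j) (hWcol : ∀ j, ∑ i, W i j = 1)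
    (hirr : ∀ i j : Fin n, ∃ k : ℕ, 0 < (W ^ k) i j)
    (s : Fin n → ℝ) (hs : ∀ i, 0 ≤ s i) (hs1 : ∑ i, s i = 1)
    (hstat : W.mulVec s = s)
    (tmix : ℕ)
    (hleast : ∀ t : ℕ,
      (∀ p : Fin n → ℝ, (∀ i, 0 ≤ p i) → ∑ i, p i = 1 →
        ∑ i, |((lazyWalk W ^ t).mulVec p) i - s i| ≤ 1 / 2) → tmix ≤ t)
    (Lp : Matrix (Fin n) (Fin n) ℝ)
    (hLp : IsMoorePenrose ((1 : Matrix (Fin n) (Fin n) ℝ) - W) Lp) :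
    Real.sqrt tmix ≤ 16 * ⨆ j : Fin n, ∑ i, |Lp i j| := by
  have hW : W ∈ colStochastic ℝ (Fin n) := mem_colStochastic_iff_sum.2 ⟨hWnn, hWcol⟩
  set K := ⨆ j : Fin n, ∑ i, |Lp i j|
  have hK : ∀ j, ∑ i, |Lp i j| ≤ K := le_ciSup (Finite.bddAbove_range _)
  have hK0 : 0 ≤ K := Real.iSup_nonneg fun j => sum_nonneg fun i _ => abs_nonneg _
  obtain _ | T := tmix
  · simpa using hK0
  obtain ⟨p, hp0, hp1, hfar⟩ : ∃ p : Fin n → ℝ, (∀ i, 0 ≤ p i) ∧ ∑ i, p i = 1 ∧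
      1 / 2 < ∑ i, |(lazyWalk W ^ T *ᵥ p) i - s i| := by
    by_contra! h
    exact absurd (hleast T h) (by omega)
  have hv : ∑ i, (p - s) i = 0 := by simp [sum_sub_distrib, hp1, hs1]
  have hv_norm : ∑ i, |(p - s) i| ≤ 2 :=
    (sum_abs_sub_le_of_nonneg hp0 hs).trans_eq (by rw [hp1, hs1]; norm_num)
  have hdist : lazyWalk W ^ T *ᵥ p - s = (lazyWalk W ^ T * (1 - W)) *ᵥ (Lp *ᵥ (p - s)) := by
    rw [← mulVec_mulVec, mulVec_pinv_mulVec_eq_self hW hirr hLp hv, mulVec_sub,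
      lazyWalk_pow_mulVec_of_mulVec_eq_self hstat]
  have hbound : 1 / 2 < 2 * T.choose (T / 2) / 2 ^ T * (K * 2) :=
    calc (1 / 2 : ℝ) < ∑ i, |((lazyWalk W ^ T * (1 - W)) *ᵥ (Lp *ᵥ (p - s))) i| := by
          simpa [← hdist] using hfar
      _ ≤ 2 * T.choose (T / 2) / 2 ^ T * ∑ i, |(Lp *ᵥ (p - s)) i| :=
          sum_abs_lazyWalk_pow_mul_one_sub_mulVec_le hW T _
      _ ≤ 2 * T.choose (T / 2) / 2 ^ T * (K * 2) := by
          gcongr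
          exact (sum_abs_mulVec_le_of_sum_abs_col_le Lp hK _).trans (by gcongr)
  have hsqrt := sqrt_succ_lt_of_half_lt_choose_half_div_two_pow_mul hbound
  push_cast
  linarith

/-- For `L = I - W` the directed Laplacian of a strongly connected graph with mixing
time `t_mix`, one has `√t_mix ≤ 16 ‖L†‖₁`, where `‖·‖₁` is the `ℓ₁ → ℓ₁` operator norm
(the maximum column `ℓ₁` norm). -/
theorem sqrt_tmix_le_pinv_norm {n : ℕ} (hn : 0 < n)
    (W : Matrix (Fin n) (Fin n) ℝ)
    (hWnn : ∀ i j, 0 ≤ W i j) (hWcol : ∀ j, ∑ i, W i j = 1)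
    (hirr : ∀ i j : Fin n, ∃ k : ℕ, 0 < (W ^ k) i j)
    (s : Fin n → ℝ) (hs : ∀ i, 0 ≤ s i) (hs1 : ∑ i, s i = 1)
    (hstat : W.mulVec s = s)
    (tmix : ℕ)
    (hmix : ∀ p : Fin n → ℝ, (∀ i, 0 ≤ p i) → ∑ i, p i = 1 →
      ∑ i, |((lazyWalk W ^ tmix).mulVec p) i - s i| ≤ 1 / 2)
    (hleast : ∀ t : ℕ,
      (∀ p : Fin n → ℝ, (∀ i, 0 ≤ p i) → ∑ i, p i = 1 →
        ∑ i, |((lazyWalk W ^ t).mulVec p) i - s i| ≤ 1 / 2) → tmix ≤ t)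
    (Lp : Matrix (Fin n) (Fin n) ℝ)
    (hLp : IsMoorePenrose ((1 : Matrix (Fin n) (Fin n) ℝ) - W) Lp) :
    Real.sqrt tmix ≤ 16 * ⨆ j : Fin n, ∑ i, |Lp i j| :=
  sqrt_tmix_le_pinv_norm_general W hWnn hWcol hirr s hs hs1 hstat tmix hleast Lp hLp
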